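/- Let n be a positive even integer, z ∈ I^FPF_n, and i ∈ [n−1]. Then: ℓ_fpf(s_i z s_i) = ℓ_fpf(z) + 1 if z(i) < z(i+1); ℓ_fpf(s_i z s_i) = ℓ_fpf(z) if z(i) = i+1 and z(i+1) = i; and ℓ_fpf(s_i z s_i) = ℓ_fpf(z) − 1 if i+1 ≠ z(i) > z(i+1) ≠ i. -/

import Mathlib

open MvPolynomial

noncomputable section

/-- The coefficient ring `ℤ[β]`. -/
abbrev Rb : Type := Polynomial ℤ

/-- The indeterminate `β`. -/
def bb : Rb := Polynomial.X

/-- The order-reversing permutation `n⋯321`, i.e. `i ↦ n+1-i` in 1-indexed notation. -/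
def revPerm (n : ℕ) : Equiv.Perm (Fin n) :=
  ⟨Fin.rev, Fin.rev, fun i => Fin.rev_rev i, fun i => Fin.rev_rev i⟩

/-- `z` is a fixed-point-free involution. -/
def IsFPF {n : ℕ} (z : Equiv.Perm (Fin n)) : Prop :=
  z * z = 1 ∧ ∀ i, z i ≠ i

/-- `x_i + x_j + β x_i x_j`. -/
def oplus {n : ℕ} (i j : Fin n) : MvPolynomial (Fin n) Rb :=
  X i + X j + C bb * (X i * X j)

/-- `IsDivDiffB i j f g` encodes `∂_i^{(β)} f = g` where `j = i+1`:
`∂_i^{(β)} f = ((1+βx_j) f - s_i((1+βx_j) f)) / (x_i - x_j)`, stated multiplicatively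
(the quotient is exact, and `g` is uniquely determined since the ring is a domain). -/
def IsDivDiffB {n : ℕ} (i j : Fin n) (f g : MvPolynomial (Fin n) Rb) : Prop :=
  (X i - X j) * g =
    (1 + C bb * X j) * f - rename ⇑(Equiv.swap i j) ((1 + C bb * X j) * f)

/-- `∏_{1 ≤ i < j ≤ n-i} (x_i + x_j + β x_i x_j)` (variables 0-indexed). -/
def spTop (n : ℕ) : MvPolynomial (Fin n) Rb :=
  ∏ p ∈ Finset.univ.filter
      (fun p : Fin n × Fin n => p.1 < p.2 ∧ (p.1 : ℕ) + (p.2 : ℕ) + 2 ≤ n),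
    oplus p.1 p.2

/-- `x_1^{n-1} x_2^{n-2} ⋯ x_{n-1}^1` (variables 0-indexed). -/
def grTop (n : ℕ) : MvPolynomial (Fin n) Rb :=
  ∏ a : Fin n, X a ^ (n - 1 - (a : ℕ))

/-- The defining property of the family of symplectic Grothendieck polynomials. -/
def IsSpFam (n : ℕ) (G : Equiv.Perm (Fin n) → MvPolynomial (Fin n) Rb) : Prop :=
  G (revPerm n) = spTop n ∧
    ∀ z : Equiv.Perm (Fin n), IsFPF z →
      ∀ i j : Fin n, (j : ℕ) = (i : ℕ) + 1 →
        z i ≠ j → z j ≠ i → z j < z i →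
          IsDivDiffB i j (G z) (G (Equiv.swap i j * z * Equiv.swap i j))

/-- The defining property of the family of Grothendieck polynomials. -/
def IsGrothFam (n : ℕ) (G : Equiv.Perm (Fin n) → MvPolynomial (Fin n) Rb) : Prop :=
  G (revPerm n) = grTop n ∧
    ∀ (w : Equiv.Perm (Fin n)) (i j : Fin n), (j : ℕ) = (i : ℕ) + 1 →
      w j < w i → IsDivDiffB i j (G w) (G (w * Equiv.swap i j))

/-- The length (number of inversions) of a permutation. -/
def invLen {n : ℕ} (w : Equiv.Perm (Fin n)) : ℕ :=
  (Finset.univ.filter (fun p : Fin n × Fin n => p.1 < p.2 ∧ w p.2 < w p.1)).card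

/-- The fixed-point-free involution length `ℓ_fpf(z) = #{(i,j) : z(i) > z(j) < i < j}`. -/
def fpfLen {n : ℕ} (z : Equiv.Perm (Fin n)) : ℕ :=
  (Finset.univ.filter
      (fun p : Fin n × Fin n => z p.2 < z p.1 ∧ z p.2 < p.1 ∧ p.1 < p.2)).card

/-- The underlying function of `Θ = (1,2)(3,4)⋯(n-1,n)`. -/
def thetaFun (n : ℕ) (hn : n % 2 = 0) (i : Fin n) : Fin n :=
  ⟨if (i : ℕ) % 2 = 0 then (i : ℕ) + 1 else (i : ℕ) - 1, by
    have hi := i.isLt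
    split_ifs with h <;> omega⟩

/-- The fixed-point-free involution `Θ = (1,2)(3,4)⋯(n-1,n)`. -/
def theta (n : ℕ) (hn : n % 2 = 0) : Equiv.Perm (Fin n) :=
  Function.Involutive.toPerm (thetaFun n hn) (by
    intro i
    have hi := i.isLt
    apply Fin.ext
    simp only [thetaFun]
    split_ifs <;> omega)

/-- One step of the partial Hecke action: `heckeStep a z = some (z · s_{a+1})` when defined,
with `a` a 0-indexed letter (so `a` corresponds to the simple transposition of `a+1, a+2`
in 1-indexed notation). -/
def heckeStep {n : ℕ} (a : ℕ) (z : Equiv.Perm (Fin n)) : Option (Equiv.Perm (Fin n)) :=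
  if h : a + 1 < n then
    let i : Fin n := ⟨a, Nat.lt_of_succ_lt h⟩
    let j : Fin n := ⟨a + 1, h⟩
    if z i < z j then some (Equiv.swap i j * z * Equiv.swap i j)
    else if z i = j ∧ z j = i then none
    else if z i ≠ j ∧ z j ≠ i ∧ z j < z i then some z
    else none
  else none

/-- Apply a word of (0-indexed) letters to `z` via the partial Hecke action. -/
def heckeApply {n : ℕ} (l : List ℕ) (z : Equiv.Perm (Fin n)) :
    Option (Equiv.Perm (Fin n)) :=
  l.foldl (fun o a => o.bind (heckeStep a)) (some z)

/-- The simple transposition corresponding to the 0-indexed letter `a`. -/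
def swapAt (n : ℕ) (a : ℕ) : Equiv.Perm (Fin n) :=
  if h : a + 1 < n then Equiv.swap ⟨a, Nat.lt_of_succ_lt h⟩ ⟨a + 1, h⟩ else 1

/-- The permutation `s_{i_1} s_{i_2} ⋯ s_{i_l}` of a word. -/
def wordToPerm (n : ℕ) (l : List ℕ) : Equiv.Perm (Fin n) := (l.map (swapAt n)).prod

/-- `l` is a reduced word for `w`. -/
def IsReducedWord (n : ℕ) (w : Equiv.Perm (Fin n)) (l : List ℕ) : Prop :=
  (∀ a ∈ l, a + 1 < n) ∧ wordToPerm n l = w ∧ l.length = invLen w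

/-- The set of Hecke atoms `B_fpf(z)`. -/
def Bfpf (n : ℕ) (hn : n % 2 = 0) (z : Equiv.Perm (Fin n)) :
    Finset (Equiv.Perm (Fin n)) :=
  @Finset.filter _
    (fun w => ∃ l : List ℕ, IsReducedWord n w l ∧ heckeApply l (theta n hn) = some z)
    (Classical.decPred _) Finset.univ

/-- `extPerm z w` is the permutation `z × w` acting on the first `m` letters by `z`
and the last `n` letters by `w`. -/
def extPerm {m n : ℕ} (z : Equiv.Perm (Fin m)) (w : Equiv.Perm (Fin n)) :
    Equiv.Perm (Fin (m + n)) :=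
  finSumFinEquiv.symm.trans ((Equiv.sumCongr z w).trans finSumFinEquiv)

/-- `rank(z_{[i][j]}) = #{k ∈ [j] : z(k) ≤ i}` (1-indexed sizes `i, j`). -/
def permRank {n : ℕ} (z : Equiv.Perm (Fin n)) (i j : ℕ) : ℕ :=
  (Finset.univ.filter (fun k : Fin n => (k : ℕ) < j ∧ ((z k : Fin n) : ℕ) < i)).card

/-- The rank of the upper-left `i × j` corner of `A` (1-indexed sizes `i, j ≤ n`). -/
def cornerRank {n : ℕ} (A : Matrix (Fin n) (Fin n) ℂ) (i j : ℕ) : ℕ :=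
  Matrix.rank (Matrix.of fun (a : Fin (min i n)) (b : Fin (min j n)) =>
    A ⟨(a : ℕ), lt_of_lt_of_le a.isLt (min_le_right i n)⟩
      ⟨(b : ℕ), lt_of_lt_of_le b.isLt (min_le_right j n)⟩)

/-- The orthogonal Rothe diagram `D^O(z) = {(i, z(j)) : z(i) > z(j) ≤ i < j}` (0-indexed). -/
def DO (n : ℕ) (z : Equiv.Perm (Fin n)) : Finset (Fin n × Fin n) :=
  Finset.image (fun p : Fin n × Fin n => (p.1, z p.2))
    (Finset.univ.filter (fun p : Fin n × Fin n => z p.2 < z p.1 ∧ z p.2 ≤ p.1 ∧ p.1 < p.2))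

/-- The symplectic Rothe diagram `D^Sp(z) = {(i, z(j)) : z(i) > z(j) < i < j}` (0-indexed). -/
def DSp (n : ℕ) (z : Equiv.Perm (Fin n)) : Finset (Fin n × Fin n) :=
  Finset.image (fun p : Fin n × Fin n => (p.1, z p.2))
    (Finset.univ.filter (fun p : Fin n × Fin n => z p.2 < z p.1 ∧ z p.2 < p.1 ∧ p.1 < p.2))

/-- The essential set `Ess(D) = {(i,j) ∈ D : (i,j+1) ∉ D and (i+1,j) ∉ D}`. -/
def Ess {n : ℕ} (D : Finset (Fin n × Fin n)) : Finset (Fin n × Fin n) :=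
  D.filter (fun p =>
    (∀ q ∈ D, ¬(q.1 = p.1 ∧ (q.2 : ℕ) = (p.2 : ℕ) + 1)) ∧
    (∀ q ∈ D, ¬((q.1 : ℕ) = (p.1 : ℕ) + 1 ∧ q.2 = p.2)))

/-- A permutation is vexillary if it avoids the pattern 2143. -/
def Vexillary {n : ℕ} (z : Equiv.Perm (Fin n)) : Prop :=
  ¬ ∃ i j k l : Fin n, i < j ∧ j < k ∧ k < l ∧ z j < z i ∧ z i < z l ∧ z l < z k

/-- The ideal of `ℤ[x_1,…,x_N]` generated by symmetric polynomials with zero constant term. -/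
def ILambda (N : ℕ) : Ideal (MvPolynomial (Fin N) ℤ) :=
  Ideal.span {f : MvPolynomial (Fin N) ℤ |
    (∀ σ : Equiv.Perm (Fin N), rename (⇑σ) f = f) ∧ coeff 0 f = 0}

/-- Substitute `x_j = 0` for all `j > n`, producing a polynomial in `x_1,…,x_n`. -/
def truncVars (n N : ℕ) (f : MvPolynomial (Fin N) Rb) : MvPolynomial (Fin n) Rb :=
  aeval (fun i : Fin N => if h : (i : ℕ) < n then X ⟨(i : ℕ), h⟩ else 0) f

/-- The order used to list the elements of a pipe-dream subset `S`:
rows weakly increasing, columns strictly decreasing within a row. -/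
def rowOrder {n : ℕ} (p q : Fin n × Fin n) : Prop :=
  p.1 < q.1 ∨ (p.1 = q.1 ∧ q.2 < p.2)

/-- `δ(S)` is a symplectic Hecke word for `z` (with Hecke words computed from `Θ`);
here `L` is the listing of `S` in the order `rowOrder`, and `(a,b) ∈ S` (0-indexed)
contributes the 0-indexed letter `a + b`, i.e. the 1-indexed letter `(b+1)+(a+1)-1`. -/
def DeltaHeckeWord (n : ℕ) (hn : n % 2 = 0) (z : Equiv.Perm (Fin n))
    (S : Finset (Fin n × Fin n)) : Prop :=
  ∃ L : List (Fin n × Fin n), L.toFinset = S ∧ L.Chain' rowOrder ∧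
    heckeApply (L.map (fun p => (p.1 : ℕ) + (p.2 : ℕ))) (theta n hn) = some z


/-! For a fixed-point-free involution `z` of `[n]`, sort the inversions `(a, b)` of `z` by
comparing `a` with `z b`. Those with `z b < a` are exactly the pairs counted by `ℓ_fpf(z)`,
`(a, b) ↦ (z b, z a)` maps those with `a < z b` bijectively onto them, and those with `z b = a`
are the `n / 2` cycles `(a, z a)`. Hence `ℓ(z) = 2 ℓ_fpf(z) + n / 2`, and it suffices to see
that `ℓ(s_i z s_i) = ℓ(z) + 2` when `z(i) < z(i+1)`: multiplication by `s_i` on the right, and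
then on the left (as `z(i), z(i+1) ∉ {i, i+1}`), each creates one new inversion.
If `z` swaps `i` and `i+1`, it commutes with `s_i`; the decreasing case is the increasing one
applied to `s_i z s_i`. -/

section Inversions

open Equiv Finset

variable {n : ℕ}

lemma swap_lt_swap_iff {i j a b : Fin n} (hij : (j : ℕ) = i + 1)
    (hab : ¬(a = i ∧ b = j)) (hba : ¬(a = j ∧ b = i)) :
    swap i j a < swap i j b ↔ a < b := by
  simp only [swap_apply_def]
  split_ifs <;> simp_all [Fin.ext_iff] <;> omega

lemma invLen_inv (w : Perm (Fin n)) : invLen w⁻¹ = invLen w :=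
  card_equiv ((prodComm _ _).trans (w⁻¹.prodCongr w⁻¹)) fun p => by
    rw [mem_filter, mem_filter]
    simp [and_comm]

lemma invLen_mul_swap {w : Perm (Fin n)} {i j : Fin n} (hij : (j : ℕ) = i + 1)
    (h : w i < w j) : invLen (w * swap i j) = invLen w + 1 := by
  have hji : (j, i) ∉ univ.filter (fun p : Fin n × Fin n => p.1 < p.2 ∧ w p.2 < w p.1) := by
    simp only [mem_filter, mem_univ, true_and]; omega
  calc invLen (w * swap i j)
      = #(univ.filter fun p : Fin n × Fin n => swap i j p.1 < swap i j p.2 ∧ w p.2 < w p.1) :=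
        card_equiv ((swap i j).prodCongr (swap i j)) fun p => by
          rw [mem_filter, mem_filter]
          simp
    _ = #(insert (j, i) (univ.filter fun p : Fin n × Fin n => p.1 < p.2 ∧ w p.2 < w p.1)) := by
        congr 1
        ext ⟨a, b⟩
        by_cases hab : a = i ∧ b = j
        · obtain ⟨rfl, rfl⟩ := hab
          simp only [mem_filter, mem_univ, swap_apply_left, swap_apply_right, true_and,
            mem_insert, Prod.mk.injEq, Fin.ext_iff]
          omega
        by_cases hba : a = j ∧ b = i
        · obtain ⟨rfl, rfl⟩ := hba
          simp only [mem_filter, mem_univ, swap_apply_right, swap_apply_left, h, and_true,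
            true_and, mem_insert, true_or, iff_true]
          omega
        simp [swap_lt_swap_iff hij hab hba, hba]
    _ = invLen w + 1 := card_insert_of_notMem hji

lemma invLen_swap_mul {w : Perm (Fin n)} {i j : Fin n} (hij : (j : ℕ) = i + 1)
    (h : w⁻¹ i < w⁻¹ j) : invLen (swap i j * w) = invLen w + 1 := by
  rw [← invLen_inv, mul_inv_rev, swap_inv, invLen_mul_swap hij h, invLen_inv]

end Inversions

lemma Equiv.swap_mul_mul_swap_eq_self {α : Type*} [DecidableEq α] {f : Perm α} {i j : α}
    (hi : f i = j) (hj : f j = i) : swap i j * f * swap i j = f := by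
  rw [mul_assoc, mul_swap_eq_swap_mul, hi, hj, swap_comm, ← mul_assoc, swap_mul_self, one_mul]

namespace IsFPF

open Equiv Finset

variable {n : ℕ} {z : Perm (Fin n)}

lemma apply_apply (hz : IsFPF z) (a : Fin n) : z (z a) = a := by
  simpa using congrArg (· a) hz.1

lemma inv_eq (hz : IsFPF z) : z⁻¹ = z := inv_eq_of_mul_eq_one_right hz.1

lemma conj (hz : IsFPF z) (σ : Perm (Fin n)) : IsFPF (σ * z * σ⁻¹) := by
  refine ⟨?_, fun a ha => hz.2 (σ⁻¹ a) ?_⟩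
  · rw [show σ * z * σ⁻¹ * (σ * z * σ⁻¹) = σ * (z * z) * σ⁻¹ by group, hz.1, mul_one,
      mul_inv_cancel]
  · rw [Perm.mul_apply, Perm.mul_apply] at ha
    exact Perm.eq_inv_iff_eq.mpr ha

lemma two_mul_card_filter_lt_apply (hz : IsFPF z) :
    2 * #(univ.filter fun a => a < z a) = n := by
  have hcompl : #(univ.filter fun a => ¬a < z a) = #(univ.filter fun a => a < z a) :=
    card_equiv z fun a => by
      rw [mem_filter, mem_filter, hz.apply_apply, not_lt]
      exact ⟨fun h => ⟨mem_univ _, lt_of_le_of_ne h.2 (hz.2 a)⟩, fun h => ⟨mem_univ _, h.2.le⟩⟩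
  have := card_filter_add_card_filter_not (s := univ) fun a => a < z a
  rw [hcompl, card_univ, Fintype.card_fin] at this
  omega

lemma invLen_eq_two_mul_fpfLen_add (hz : IsFPF z) :
    invLen z = 2 * fpfLen z + #(univ.filter fun a => a < z a) := by
  set I := univ.filter fun p : Fin n × Fin n => p.1 < p.2 ∧ z p.2 < z p.1
  set J := I.filter fun p => ¬z p.2 < p.1
  have below : #(I.filter fun p => z p.2 < p.1) = fpfLen z :=
    card_equiv (.refl _) fun p => by
      simp only [I, mem_filter, mem_univ, true_and, refl_apply]
      tauto
  have above : #(J.filter fun p => p.1 < z p.2) = fpfLen z :=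
    card_equiv ((prodComm _ _).trans (z.prodCongr z)) fun p => by
      simp only [J, I, mem_filter, mem_univ, true_and, trans_apply, prodComm_apply,
        prodCongr_apply, Prod.map, Prod.fst_swap, Prod.snd_swap, hz.apply_apply]
      omega
  have diag : #(J.filter fun p => ¬p.1 < z p.2) = #(univ.filter fun a => a < z a) := by
    have hpair : ∀ p ∈ J.filter (fun p => ¬p.1 < z p.2), z p.1 = p.2 := fun p hp => by
      simp only [J, I, mem_filter, mem_univ, true_and] at hp
      rw [← hz.apply_apply p.2, show z p.2 = p.1 by omega]
    refine card_nbij' Prod.fst (fun a => (a, z a)) (fun p hp => ?_) (fun a ha => ?_)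
      (fun p hp => Prod.ext rfl (hpair p hp)) (fun _ _ => rfl)
    · have := hpair p hp
      simp only [J, I, mem_coe, mem_filter, mem_univ, true_and] at hp ⊢
      omega
    · have := hz.apply_apply a
      simp only [J, I, mem_coe, mem_filter, mem_univ, true_and] at ha ⊢
      omega
  have hI : #(I.filter fun p => z p.2 < p.1) + #J = #I := card_filter_add_card_filter_not _
  have hJ := card_filter_add_card_filter_not (s := J) fun p => p.1 < z p.2
  change #I = _
  omega

lemma two_mul_invLen (hz : IsFPF z) : 2 * invLen z = 4 * fpfLen z + n := by
  have := hz.two_mul_card_filter_lt_apply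
  rw [hz.invLen_eq_two_mul_fpfLen_add]
  omega

end IsFPF

section ConjugationBySwap

open Equiv

variable {n : ℕ} {z : Perm (Fin n)} {i j : Fin n}

lemma IsFPF.apply_ne_of_lt (hz : IsFPF z) (hij : i < j) (h : z i < z j) : z i ≠ j := fun e => by
  have hzj : z j = i := by rw [← e, hz.apply_apply]
  rw [e, hzj] at h
  exact lt_asymm hij h

lemma IsFPF.invLen_swap_mul_mul_swap (hz : IsFPF z) (hij : (j : ℕ) = i + 1) (h : z i < z j) :
    invLen (swap i j * z * swap i j) = invLen z + 2 := by
  have hzi : z i ≠ j := hz.apply_ne_of_lt (by omega) h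
  have hzj : z j ≠ i := fun e => hzi (by rw [← e, hz.apply_apply])
  have hinv : (z * swap i j)⁻¹ i < (z * swap i j)⁻¹ j := by
    rwa [mul_inv_rev, swap_inv, hz.inv_eq, Perm.mul_apply, Perm.mul_apply,
      swap_apply_of_ne_of_ne (hz.2 i) hzi, swap_apply_of_ne_of_ne hzj (hz.2 j)]
  rw [mul_assoc, invLen_swap_mul hij hinv, invLen_mul_swap hij h]

lemma IsFPF.fpfLen_swap_mul_mul_swap (hz : IsFPF z) (hij : (j : ℕ) = i + 1) (h : z i < z j) :
    fpfLen (swap i j * z * swap i j) = fpfLen z + 1 := by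
  have hconj : IsFPF (swap i j * z * swap i j) := by simpa using hz.conj (swap i j)
  have := hz.invLen_swap_mul_mul_swap hij h
  have := hz.two_mul_invLen
  have := hconj.two_mul_invLen
  omega

end ConjugationBySwap

theorem statement16_general (n : ℕ)
    (z : Equiv.Perm (Fin n)) (hz : IsFPF z)
    (i j : Fin n) (hij : (j : ℕ) = (i : ℕ) + 1) :
    (z i < z j → fpfLen (Equiv.swap i j * z * Equiv.swap i j) = fpfLen z + 1) ∧
    (z i = j → z j = i → fpfLen (Equiv.swap i j * z * Equiv.swap i j) = fpfLen z) ∧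
    (z i ≠ j → z j ≠ i → z j < z i →
      fpfLen (Equiv.swap i j * z * Equiv.swap i j) + 1 = fpfLen z) := by
  refine ⟨hz.fpfLen_swap_mul_mul_swap hij, fun hi hj => ?_, fun hi hj h => ?_⟩
  · rw [Equiv.swap_mul_mul_swap_eq_self hi hj]
  · set z' := Equiv.swap i j * z * Equiv.swap i j
    have hz' : IsFPF z' := by simpa using hz.conj (Equiv.swap i j)
    have h' : z' i < z' j := by
      simpa [z', Equiv.swap_apply_of_ne_of_ne (hz.2 i) hi,
        Equiv.swap_apply_of_ne_of_ne hj (hz.2 j)] using h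
    have hback : Equiv.swap i j * z' * Equiv.swap i j = z := by simp [z', mul_assoc]
    simpa [hback] using (hz'.fpfLen_swap_mul_mul_swap hij h').symm

theorem statement16 (n : ℕ) (hpos : 0 < n) (hev : n % 2 = 0)
    (z : Equiv.Perm (Fin n)) (hz : IsFPF z)
    (i j : Fin n) (hij : (j : ℕ) = (i : ℕ) + 1) :
    (z i < z j → fpfLen (Equiv.swap i j * z * Equiv.swap i j) = fpfLen z + 1) ∧
    (z i = j → z j = i → fpfLen (Equiv.swap i j * z * Equiv.swap i j) = fpfLen z) ∧
    (z i ≠ j → z j ≠ i → z j < z i →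
      fpfLen (Equiv.swap i j * z * Equiv.swap i j) + 1 = fpfLen z) :=
  statement16_general n z hz i j hij

end
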